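/- arXiv:1504.05659 — 3 statements merged into one kernel-verified Lean document; each statement's English description precedes it below -/
import Mathlib

section
/- Let A and B be n×n real symmetric positive semidefinite matrices with eigenvalues a_1 ≥ … ≥ a_n and b_1 ≥ … ≥ b_n respectively. Then tr(AB) ≤ Σ_{i=1}^n a_i b_i (von Neumann's trace inequality for PSD matrices). -/
open Matrix

theorem stmt8 (n : ℕ)
    (A B : Matrix (Fin n) (Fin n) ℝ)
    (hA : A.PosSemidef) (hB : B.PosSemidef)
    (U W : Matrix (Fin n) (Fin n) ℝ) (hU : Uᵀ * U = 1) (hW : Wᵀ * W = 1)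
    (a b : Fin n → ℝ) (ha : Antitone a) (hb : Antitone b)
    (hAd : A = U * Matrix.diagonal a * Uᵀ)
    (hBd : B = W * Matrix.diagonal b * Wᵀ) :
    (A * B).trace ≤ ∑ i, a i * b i := by
  have hUU : U * Uᵀ = 1 := mul_eq_one_comm.mp hU
  set V : Matrix (Fin n) (Fin n) ℝ := Uᵀ * W with hVdef
  have hVVt : V * Vᵀ = 1 := by
    have hVtV : Vᵀ * V = 1 := by
      rw [hVdef, transpose_mul, transpose_transpose, Matrix.mul_assoc,
        ← Matrix.mul_assoc U, hUU, Matrix.one_mul, hW]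
    exact mul_eq_one_comm.mp hVtV
  have hVtV : Vᵀ * V = 1 := mul_eq_one_comm.mpr hVVt
  -- the matrix of squared entries of V is doubly stochastic
  set S : Matrix (Fin n) (Fin n) ℝ := Matrix.of fun i j => V i j ^ 2 with hSdef
  have hS : S ∈ doublyStochastic ℝ (Fin n) := by
    rw [mem_doublyStochastic_iff_sum]
    refine ⟨fun i j => sq_nonneg _, fun i => ?_, fun j => ?_⟩
    · have := congrFun (congrFun hVVt i) i
      simpa [hSdef, Matrix.of_apply, Matrix.mul_apply, sq, Matrix.one_apply] using this
    · have := congrFun (congrFun hVtV j) j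
      simpa [hSdef, Matrix.of_apply, Matrix.mul_apply, sq, Matrix.one_apply] using this
  -- trace computation
  have hkey : (A * B).trace = ∑ i, ∑ j, a i * b j * S i j := by
    subst hAd hBd
    have : U * Matrix.diagonal a * Uᵀ * (W * Matrix.diagonal b * Wᵀ)
        = U * (Matrix.diagonal a * V * Matrix.diagonal b * Vᵀ) * Uᵀ := by
      rw [hVdef, transpose_mul, transpose_transpose]
      simp only [Matrix.mul_assoc]
      rw [hUU, Matrix.mul_one]
    rw [this, Matrix.trace_mul_cycle, ← Matrix.mul_assoc, hU, Matrix.one_mul]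
    simp only [Matrix.trace, Matrix.diag_apply, Matrix.mul_apply,
      Matrix.diagonal_apply, Matrix.transpose_apply, hSdef, Matrix.of_apply]
    simp only [Finset.mul_sum, Finset.sum_ite_eq, sq, ite_mul, zero_mul,
      Finset.sum_ite_eq', Finset.mem_univ, if_pos]
    congr 1
    ext i
    congr 1
    ext j
    simp only [mul_ite, mul_zero, Finset.sum_ite_eq', Finset.mem_univ, ite_true]
    ring
  rw [hkey]
  -- Birkhoff + rearrangement
  obtain ⟨w, hw0, hw1, hwS⟩ := exists_eq_sum_perm_of_mem_doublyStochastic hS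
  have hmono : Monovary a b := ha.monovary hb
  have h1 : ∀ i j : Fin n, S i j =
      ∑ σ : Equiv.Perm (Fin n), w σ * (σ.permMatrix ℝ) i j := by
    intro i j
    rw [← hwS]
    simp [Matrix.sum_apply]
  calc ∑ i, ∑ j, a i * b j * S i j
      = ∑ σ : Equiv.Perm (Fin n), w σ * ∑ i, a i * b (σ i) := by
        simp only [h1, Finset.mul_sum]
        rw [show (∑ i, ∑ j, ∑ σ : Equiv.Perm (Fin n),
              a i * b j * (w σ * (σ.permMatrix ℝ) i j))
            = ∑ i, ∑ σ : Equiv.Perm (Fin n), ∑ j,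
              a i * b j * (w σ * (σ.permMatrix ℝ) i j) from
          Finset.sum_congr rfl fun i _ => Finset.sum_comm, Finset.sum_comm]
        refine Finset.sum_congr rfl fun σ _ => ?_
        refine Finset.sum_congr rfl fun i _ => ?_
        rw [Finset.sum_eq_single (σ i)]
        · simp only [Equiv.Perm.permMatrix, PEquiv.toMatrix_apply,
            Equiv.toPEquiv_apply, Option.mem_def, Option.some.injEq, ite_true]
          ring
        · intro j _ hj
          simp [Equiv.Perm.permMatrix, PEquiv.toMatrix_apply,
            Equiv.toPEquiv_apply, Ne.symm hj]
        · simp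
    _ ≤ ∑ σ : Equiv.Perm (Fin n), w σ * ∑ i, a i * b i := by
        refine Finset.sum_le_sum fun σ _ => mul_le_mul_of_nonneg_left ?_ (hw0 σ)
        have := hmono.sum_smul_comp_perm_le_sum_smul (σ := σ)
        simpa [smul_eq_mul] using this
    _ = ∑ i, a i * b i := by
        rw [← Finset.sum_mul, hw1, one_mul]
end

section
/- Let X be n×(d+1) with full column rank, Φ symmetric n×n with α'Φα>0 whenever α≠0 and X'α=0. For k = d+2,…,n define f_k via the eigenvectors v_{k−d−1} of QΦQ (Q = I − X(X'X)^{-1}X', eigenvalues λ_1 ≥ … ≥ λ_{n−d−1} > 0), and set the coefficient vectors α_k = λ_{k−d−1}^{-1} Q v_{k−d−1}. Then the evaluation vectors f_k = Φα_k + Xβ_k with β_k = −λ_{k−d−1}^{-1}(X'X)^{-1}X'Φ v_{k−d−1} satisfy f_k = v_{k−d−1}; in particular X'f_k = 0 and f_k'f_{k*} = 1 if k = k* and 0 otherwise, for k,k* ∈ {d+2,…,n}. -/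
open Matrix

theorem stmt17 (n d : ℕ) (hd : d + 1 < n)
    (X : Matrix (Fin n) (Fin (d + 1)) ℝ) (hX : X.rank = d + 1)
    (Φ : Matrix (Fin n) (Fin n) ℝ) (hΦ : Φᵀ = Φ)
    (hpos : ∀ α : Fin n → ℝ, α ≠ 0 → Xᵀ *ᵥ α = 0 → 0 < α ⬝ᵥ (Φ *ᵥ α))
    (Q : Matrix (Fin n) (Fin n) ℝ)
    (hQ : Q = 1 - X * (Xᵀ * X)⁻¹ * Xᵀ)
    (v : Fin (n - (d + 1)) → Fin n → ℝ)
    (lam : Fin (n - (d + 1)) → ℝ) (hlam : ∀ j, 0 < lam j)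
    (horth : ∀ j j', v j ⬝ᵥ v j' = if j = j' then 1 else 0)
    (heig : ∀ j, (Q * Φ * Q) *ᵥ v j = lam j • v j) :
    ∀ j : Fin (n - (d + 1)),
      (Φ *ᵥ ((lam j)⁻¹ • (Q *ᵥ v j)) +
        X *ᵥ (-((lam j)⁻¹ • ((Xᵀ * X)⁻¹ *ᵥ (Xᵀ *ᵥ (Φ *ᵥ v j)))))) = v j ∧
      Xᵀ *ᵥ v j = 0 ∧
      (∀ j' : Fin (n - (d + 1)), v j ⬝ᵥ v j' = if j = j' then 1 else 0) := by
  -- Xᵀ * X is invertible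
  have hrank : (Xᵀ * X).rank = d + 1 := by rw [Matrix.rank_transpose_mul_self, hX]
  have hunit : IsUnit (Xᵀ * X) := by
    rw [← Matrix.mulVec_surjective_iff_isUnit]
    have htop : LinearMap.range (Xᵀ * X).mulVecLin = ⊤ := by
      apply Submodule.eq_top_of_finrank_eq
      have : Module.finrank ℝ (Fin (d + 1) → ℝ) = d + 1 := by simp
      rw [this]
      exact hrank
    intro y
    have := htop ▸ Submodule.mem_top (x := y) (R := ℝ)
    obtain ⟨x, hx⟩ := this
    exact ⟨x, hx⟩
  have hinv : (Xᵀ * X) * (Xᵀ * X)⁻¹ = 1 :=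
    Matrix.mul_nonsing_inv _ ((Matrix.isUnit_iff_isUnit_det _).mp hunit)
  have hXQ : Xᵀ * Q = 0 := by
    rw [hQ, Matrix.mul_sub, Matrix.mul_one]
    simp only [← Matrix.mul_assoc]
    rw [hinv, Matrix.one_mul, sub_self]
  intro j
  have hl := (hlam j).ne'
  -- Xᵀ v j = 0
  have hXv : Xᵀ *ᵥ v j = 0 := by
    have h1 : Xᵀ *ᵥ ((Q * Φ * Q) *ᵥ v j) = lam j • (Xᵀ *ᵥ v j) := by
      rw [heig j, Matrix.mulVec_smul]
    rw [Matrix.mulVec_mulVec, ← Matrix.mul_assoc, ← Matrix.mul_assoc, hXQ] at h1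
    simp only [Matrix.zero_mul, Matrix.zero_mulVec] at h1
    exact (smul_eq_zero.mp h1.symm).resolve_left hl
  -- Q v j = v j
  have hQv : Q *ᵥ v j = v j := by
    rw [hQ, Matrix.sub_mulVec, Matrix.one_mulVec, Matrix.mul_assoc, ← Matrix.mulVec_mulVec,
      ← Matrix.mulVec_mulVec, hXv]
    simp
  refine ⟨?_, hXv, fun j' => horth j j'⟩
  have key : Q *ᵥ (Φ *ᵥ v j) = lam j • v j := by
    have h2 := heig j
    rw [← Matrix.mulVec_mulVec, hQv, ← Matrix.mulVec_mulVec] at h2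
    exact h2
  rw [hQv, Matrix.mulVec_smul, Matrix.mulVec_neg, Matrix.mulVec_smul,
    Matrix.mulVec_mulVec, Matrix.mulVec_mulVec, ← smul_neg, ← smul_add]
  have : Φ *ᵥ v j + -((X * (Xᵀ * X)⁻¹ * Xᵀ) *ᵥ (Φ *ᵥ v j)) = Q *ᵥ (Φ *ᵥ v j) := by
    rw [hQ, Matrix.sub_mulVec, Matrix.one_mulVec, sub_eq_add_neg]
  rw [this, key, smul_smul, inv_mul_cancel₀ hl, one_smul]
end

section
/- Let Φ be symmetric n×n and X n×(d+1) of full rank with α'Φα > 0 for all nonzero α ∈ ker(X'). Then the map (α, β) ↦ (the function s ↦ α'φ(s) + β'(1,s')') restricted to {(α,β) : X'α = 0} has kernel determined by: if Φα + Xβ = 0 componentwise at the n control points and X'α = 0 then J = α'Φα = 0 forces α = 0 and then β is determined by the evaluations; consequently the n functions f_1,…,f_n of the proposed construction are linearly independent and span the natural TPS space F. -/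
/-!
Evaluating `s ↦ α'φ(s) + β'p(s)` at the control points gives `Φα + Xβ`. If this vanishes and
`X'α = 0`, pairing with `α` kills `Xβ`, so `α'Φα = 0`, whence `α = 0` and then `β = 0` since `X` has
full column rank.

At the control points, `f_1, …, f_{d+1}` are the columns of `X`, and `f_{d+1+j}` is the eigenvector
`v_j`: the eigenvalue equation forces `X'v_j = 0`, so `Q` fixes `v_j` and `QΦ v_j = λ_j v_j`. Columns
of `X` together with an orthonormal family in `ker X'` are independent, hence so are the `f_k`.
Finally `F` is the image of `ker X' × ℝ^{d+1}`, of dimension at most `(n - rank X) + (d + 1) = n`,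
and it contains the `n` independent functions `f_k`, so it is their span.
-/

open Matrix Function

namespace Matrix

variable {m n ι R : Type*}

theorem mulVec_injective_of_rank_eq_card [Fintype n] [Field R] {A : Matrix m n R}
    (h : A.rank = Fintype.card n) : Injective A.mulVec :=
  mulVec_injective_iff.mpr <| linearIndependent_iff_card_eq_finrank_span.mpr <| by
    rw [← h, rank_eq_finrank_span_cols]; rfl

theorem finrank_ker_mulVecLin_add_rank [Fintype n] [Field R] (A : Matrix m n R) :
    Module.finrank R (LinearMap.ker A.mulVecLin) + A.rank = Fintype.card n := by
  rw [add_comm, rank, LinearMap.finrank_range_add_finrank_ker, Module.finrank_fintype_fun_eq_card]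

theorem dotProduct_mulVec_eq_zero_of_transpose_mulVec_eq_zero [Fintype m] [Fintype n]
    [CommSemiring R] {A : Matrix m n R} {u : m → R} (hu : Aᵀ *ᵥ u = 0) (x : n → R) :
    u ⬝ᵥ (A *ᵥ x) = 0 := by
  rw [dotProduct_mulVec, ← mulVec_transpose, hu, zero_dotProduct]

theorem eq_zero_of_mulVec_add_mulVec_eq_zero [Fintype m] [Fintype n] [CommRing R] [Preorder R]
    {Φ : Matrix m m R} {X : Matrix m n R} (hX : Injective X.mulVec)
    (hpos : ∀ α : m → R, α ≠ 0 → Xᵀ *ᵥ α = 0 → 0 < α ⬝ᵥ (Φ *ᵥ α))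
    {α : m → R} {β : n → R} (hα : Xᵀ *ᵥ α = 0) (h : Φ *ᵥ α + X *ᵥ β = 0) :
    α = 0 ∧ β = 0 := by
  have hJ : α ⬝ᵥ (Φ *ᵥ α) = 0 := by
    simpa [dotProduct_add, dotProduct_mulVec_eq_zero_of_transpose_mulVec_eq_zero hα]
      using congrArg (α ⬝ᵥ ·) h
  have hα0 : α = 0 := by_contra fun hne => (hpos α hne hα).ne' hJ
  exact ⟨hα0, hX (by simpa [hα0] using h)⟩

theorem linearIndependent_sumElim_col_of_orthonormal [Fintype m] [Fintype n] [Fintype ι]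
    [DecidableEq ι] [CommRing R] {X : Matrix m n R} (hX : Injective X.mulVec) {v : ι → m → R}
    (horth : ∀ j j', v j ⬝ᵥ v j' = if j = j' then 1 else 0) (hv : ∀ j, Xᵀ *ᵥ v j = 0) :
    LinearIndependent R (Sum.elim X.col v) := by
  rw [Fintype.linearIndependent_iff]
  intro g hg
  have hsum : X *ᵥ (g ∘ Sum.inl) + ∑ j, g (Sum.inr j) • v j = 0 := by
    simp only [Fintype.sum_sum_type, Sum.elim_inl, Sum.elim_inr] at hg
    simpa [mulVec_eq_sum, col] using hg
  have hinr : ∀ j, g (Sum.inr j) = 0 := fun j => by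
    simpa [dotProduct_add, dotProduct_sum, horth,
      dotProduct_mulVec_eq_zero_of_transpose_mulVec_eq_zero (hv j)]
      using congrArg (v j ⬝ᵥ ·) hsum
  have hinl : g ∘ Sum.inl = 0 := hX (by simpa [hinr] using hsum)
  rintro (j | j)
  · exact congrFun hinl j
  · exact hinr j

theorem isUnit_det_transpose_mul_self [Fintype m] [Fintype n] [DecidableEq n]
    {X : Matrix m n ℝ} (hX : Injective X.mulVec) : IsUnit (Xᵀ * X).det :=
  (PosDef.conjTranspose_mul_self X hX).det_pos.ne'.isUnit

theorem transpose_mulVec_eq_zero_of_mulVec_eq_smul [Fintype m] [Field R] {X : Matrix m n R}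
    {Q Φ : Matrix m m R} (hQ : Xᵀ * Q = 0) {u : m → R} {c : R} (hc : c ≠ 0)
    (hu : (Q * Φ * Q) *ᵥ u = c • u) : Xᵀ *ᵥ u = 0 := by
  have : c • Xᵀ *ᵥ u = 0 := by
    rw [← mulVec_smul, ← hu, mulVec_mulVec, ← Matrix.mul_assoc, ← Matrix.mul_assoc, hQ,
      Matrix.zero_mul, Matrix.zero_mul, zero_mulVec]
  exact (smul_eq_zero.mp this).resolve_left hc

variable [Fintype m] [Fintype n] [DecidableEq m] [DecidableEq n] [CommRing R]

theorem transpose_mul_one_sub_proj {X : Matrix m n R} (hX : IsUnit (Xᵀ * X).det) :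
    Xᵀ * (1 - X * (Xᵀ * X)⁻¹ * Xᵀ) = 0 := by
  rw [Matrix.mul_sub, Matrix.mul_one, ← Matrix.mul_assoc, ← Matrix.mul_assoc,
    mul_nonsing_inv _ hX, Matrix.one_mul, sub_self]

theorem one_sub_proj_mulVec_of_transpose_mulVec_eq_zero {X : Matrix m n R} {u : m → R}
    (hu : Xᵀ *ᵥ u = 0) : (1 - X * (Xᵀ * X)⁻¹ * Xᵀ) *ᵥ u = u := by
  rw [sub_mulVec, one_mulVec, ← mulVec_mulVec, hu, mulVec_zero, sub_zero]

theorem mulVec_sub_mulVec_transpose_eq_smul {Φ : Matrix m m R} {X : Matrix m n R}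
    {u : m → R} {c : R} (hu : Xᵀ *ᵥ u = 0)
    (heig : ((1 - X * (Xᵀ * X)⁻¹ * Xᵀ) * Φ * (1 - X * (Xᵀ * X)⁻¹ * Xᵀ)) *ᵥ u = c • u) :
    Φ *ᵥ u - X *ᵥ ((Φᵀ * X * (Xᵀ * X)⁻¹)ᵀ *ᵥ u) = c • u := by
  have hsymm : (Xᵀ * X)⁻¹ᵀ = (Xᵀ * X)⁻¹ := by
    rw [transpose_nonsing_inv, transpose_mul, transpose_transpose]
  calc Φ *ᵥ u - X *ᵥ ((Φᵀ * X * (Xᵀ * X)⁻¹)ᵀ *ᵥ u)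
      = ((1 - X * (Xᵀ * X)⁻¹ * Xᵀ) * Φ) *ᵥ u := by
        rw [mulVec_mulVec, transpose_mul, transpose_mul, transpose_transpose, hsymm,
          Matrix.sub_mul, Matrix.one_mul, sub_mulVec, Matrix.mul_assoc, Matrix.mul_assoc]
    _ = c • u := by
        rw [← heig, ← mulVec_mulVec u _ (1 - _),
          one_sub_proj_mulVec_of_transpose_mulVec_eq_zero hu]

end Matrix

def finSumSubEquiv {a n : ℕ} (h : a ≤ n) : Fin a ⊕ Fin (n - a) ≃ Fin n :=
  finSumFinEquiv.trans (finCongr (Nat.add_sub_cancel' h))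

theorem comp_finSumSubEquiv_of_dite {a n : ℕ} (h : a ≤ n) {β : Type*} {f : Fin n → β}
    (g₁ : Fin a → β) (g₂ : Fin (n - a) → β)
    (hf : ∀ k : Fin n, f k = if hk : (k : ℕ) < a then g₁ ⟨k, hk⟩ else g₂ ⟨k - a, by omega⟩) :
    f ∘ finSumSubEquiv h = Sum.elim g₁ g₂ := by
  funext x
  rcases x with j | m <;> simp [hf, finSumSubEquiv]

section Spline

variable {ι κ E R : Type*} [Fintype ι] [Fintype κ]

def splineCombination [CommSemiring R] (φ : ι → E → R) (p : κ → E → R) :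
    (ι → R) × (κ → R) →ₗ[R] E → R :=
  (Fintype.linearCombination R φ).coprod (Fintype.linearCombination R p)

theorem splineCombination_mk [CommSemiring R] (φ : ι → E → R) (p : κ → E → R)
    (α : ι → R) (β : κ → R) :
    splineCombination φ p (α, β) = fun e => (∑ i, α i * φ i e) + ∑ j, β j * p j e := by
  ext e
  simp [splineCombination, Fintype.linearCombination_apply, Finset.sum_apply]

theorem splineCombination_comp [CommSemiring R] {ι' : Type*} {φ : ι → E → R} {p : κ → E → R}
    {s : ι' → E} {Φ : Matrix ι' ι R} (hΦ : ∀ i j, Φ i j = φ j (s i)) {X : Matrix ι' κ R}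
    (hX : ∀ i j, X i j = p j (s i)) (α : ι → R) (β : κ → R) :
    splineCombination φ p (α, β) ∘ s = Φ *ᵥ α + X *ᵥ β := by
  ext i
  simp [splineCombination_mk, mulVec, dotProduct, hΦ, hX, mul_comm]

-- The space `F` of the paper.
def splineSpace [CommRing R] (X : Matrix ι κ R) (φ : ι → E → R) (p : κ → E → R) :
    Submodule R (E → R) :=
  LinearMap.range <| (splineCombination φ p).comp <|
    (LinearMap.ker Xᵀ.mulVecLin).subtype.prodMap LinearMap.id

instance [Field R] (X : Matrix ι κ R) (φ : ι → E → R) (p : κ → E → R) :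
    FiniteDimensional R (splineSpace X φ p) :=
  Module.Finite.range _

theorem mem_splineSpace [CommRing R] {X : Matrix ι κ R} {φ : ι → E → R} {p : κ → E → R}
    {g : E → R} :
    g ∈ splineSpace X φ p ↔ ∃ α β, Xᵀ *ᵥ α = 0 ∧ splineCombination φ p (α, β) = g := by
  constructor
  · rintro ⟨⟨⟨α, hα⟩, β⟩, rfl⟩
    exact ⟨α, β, hα, rfl⟩
  · rintro ⟨α, β, hα, rfl⟩
    exact ⟨(⟨α, hα⟩, β), rfl⟩

theorem mem_splineSpace_right [CommRing R] [DecidableEq κ] (X : Matrix ι κ R)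
    (φ : ι → E → R) (p : κ → E → R) (j : κ) : p j ∈ splineSpace X φ p := by
  refine mem_splineSpace.mpr ⟨0, Pi.single j 1, mulVec_zero _, ?_⟩
  ext
  simp [splineCombination_mk, Pi.single_apply]

theorem finrank_splineSpace_add_rank_le [Field R] (X : Matrix ι κ R) (φ : ι → E → R)
    (p : κ → E → R) :
    Module.finrank R (splineSpace X φ p) + X.rank ≤ Fintype.card ι + Fintype.card κ := by
  have hker := Xᵀ.finrank_ker_mulVecLin_add_rank
  have hrange := LinearMap.finrank_range_le <| (splineCombination φ p).comp <|
    (LinearMap.ker Xᵀ.mulVecLin).subtype.prodMap (LinearMap.id (R := R) (M := κ → R))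
  rw [Module.finrank_prod, Module.finrank_fintype_fun_eq_card] at hrange
  rw [rank_transpose] at hker
  unfold splineSpace
  omega

theorem span_eq_splineSpace_of_linearIndependent [Field R] {X : Matrix ι κ R}
    {φ : ι → E → R} {p : κ → E → R} {ι' : Type*} [Fintype ι'] {b : ι' → E → R}
    (hb : LinearIndependent R b) (hmem : ∀ i, b i ∈ splineSpace X φ p)
    (hcard : Fintype.card ι + Fintype.card κ ≤ Fintype.card ι' + X.rank) :
    Submodule.span R (Set.range b) = splineSpace X φ p :=
  Submodule.eq_of_le_of_finrank_le (Submodule.span_le.mpr (Set.range_subset_iff.mpr hmem)) <| by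
    have := finrank_splineSpace_add_rank_le X φ p
    rw [finrank_span_eq_card hb]
    omega

variable [Field R] [DecidableEq κ]

-- `f_{d+1+j}` of the paper is `eigenSpline φ p Φ X λ_j v_j`.
noncomputable def eigenSpline (φ : ι → E → R) (p : κ → E → R) (Φ : Matrix ι ι R) (X : Matrix ι κ R) (c : R)
    (u : ι → R) : E → R :=
  fun e => c⁻¹ * (((fun i => φ i e) - (Φᵀ * X * (Xᵀ * X)⁻¹) *ᵥ fun j => p j e) ⬝ᵥ u)

theorem eigenSpline_eq_splineCombination (φ : ι → E → R) (p : κ → E → R) (Φ : Matrix ι ι R)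
    (X : Matrix ι κ R) (c : R) (u : ι → R) :
    eigenSpline φ p Φ X c u =
      splineCombination φ p (c⁻¹ • u, -(c⁻¹ • (Φᵀ * X * (Xᵀ * X)⁻¹)ᵀ *ᵥ u)) := by
  ext e
  rw [eigenSpline, splineCombination_mk, sub_dotProduct, dotProduct_comm (_ *ᵥ _),
    dotProduct_mulVec, ← mulVec_transpose]
  simp [dotProduct, Finset.mul_sum, mul_add, mul_comm, mul_left_comm, mul_assoc, sub_eq_add_neg]

theorem eigenSpline_mem_splineSpace {φ : ι → E → R} {p : κ → E → R} (Φ : Matrix ι ι R)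
    {X : Matrix ι κ R} (c : R) {u : ι → R} (hu : Xᵀ *ᵥ u = 0) :
    eigenSpline φ p Φ X c u ∈ splineSpace X φ p :=
  mem_splineSpace.mpr ⟨_, _, by rw [mulVec_smul, hu, smul_zero],
    (eigenSpline_eq_splineCombination φ p Φ X c u).symm⟩

theorem eigenSpline_comp [DecidableEq ι] {φ : ι → E → R} {p : κ → E → R} {s : ι → E} {Φ : Matrix ι ι R}
    (hΦ : ∀ i j, Φ i j = φ j (s i)) {X : Matrix ι κ R} (hX : ∀ i j, X i j = p j (s i))
    {c : R} (hc : c ≠ 0) {u : ι → R} (hu : Xᵀ *ᵥ u = 0)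
    (heig : ((1 - X * (Xᵀ * X)⁻¹ * Xᵀ) * Φ * (1 - X * (Xᵀ * X)⁻¹ * Xᵀ)) *ᵥ u = c • u) :
    eigenSpline φ p Φ X c u ∘ s = u := by
  rw [eigenSpline_eq_splineCombination, splineCombination_comp hΦ hX, mulVec_neg, mulVec_smul,
    mulVec_smul, ← sub_eq_add_neg, ← smul_sub, mulVec_sub_mulVec_transpose_eq_smul hu heig,
    smul_smul, inv_mul_cancel₀ hc, one_smul]

end Spline

theorem stmt19 (n d : ℕ) {E : Type*}
    (s : Fin n → E)
    (φ : Fin n → E → ℝ) (p : Fin (d + 1) → E → ℝ)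
    (Φ : Matrix (Fin n) (Fin n) ℝ) (hΦval : ∀ i j, Φ i j = φ j (s i))
    (X : Matrix (Fin n) (Fin (d + 1)) ℝ) (hXval : ∀ i j, X i j = p j (s i))
    (hX : X.rank = d + 1)
    (hpos : ∀ α : Fin n → ℝ, α ≠ 0 → Xᵀ *ᵥ α = 0 → 0 < α ⬝ᵥ (Φ *ᵥ α))
    (Q : Matrix (Fin n) (Fin n) ℝ)
    (hQ : Q = 1 - X * (Xᵀ * X)⁻¹ * Xᵀ)
    (v : Fin (n - (d + 1)) → Fin n → ℝ)
    (lam : Fin (n - (d + 1)) → ℝ) (hlam : ∀ j, 0 < lam j)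
    (horth : ∀ j j', v j ⬝ᵥ v j' = if j = j' then 1 else 0)
    (heig : ∀ j, (Q * Φ * Q) *ᵥ v j = lam j • v j)
    (fs : Fin n → E → ℝ)
    (hfs : ∀ k : Fin n, fs k =
      if hk : (k : ℕ) < d + 1 then p ⟨k, hk⟩
      else fun e =>
        (lam ⟨(k : ℕ) - (d + 1), by omega⟩)⁻¹ *
          (((fun i => φ i e) -
              (Φᵀ * X * (Xᵀ * X)⁻¹) *ᵥ (fun j => p j e)) ⬝ᵥ
            v ⟨(k : ℕ) - (d + 1), by omega⟩)) :
    (∀ (α : Fin n → ℝ) (β : Fin (d + 1) → ℝ), Xᵀ *ᵥ α = 0 →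
        Φ *ᵥ α + X *ᵥ β = 0 → α = 0 ∧ β = 0) ∧
      LinearIndependent ℝ fs ∧
      (Submodule.span ℝ (Set.range fs) : Set (E → ℝ)) =
        {g : E → ℝ | ∃ (α : Fin n → ℝ) (β : Fin (d + 1) → ℝ),
          Xᵀ *ᵥ α = 0 ∧
          g = fun e => (∑ i, α i * φ i e) + ∑ j, β j * p j e} := by
  subst hQ
  have hXinj : Injective X.mulVec := mulVec_injective_of_rank_eq_card (by simpa using hX)
  have hv : ∀ m, Xᵀ *ᵥ v m = 0 := fun m =>
    transpose_mulVec_eq_zero_of_mulVec_eq_smul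
      (transpose_mul_one_sub_proj (isUnit_det_transpose_mul_self hXinj)) (hlam m).ne' (heig m)
  have hdn : d + 1 ≤ n := hX ▸ X.rank_le_height
  set b := Sum.elim p fun m => eigenSpline φ p Φ X (lam m) (v m)
  have hfs_b : fs ∘ finSumSubEquiv hdn = b := comp_finSumSubEquiv_of_dite hdn _ _ hfs
  have hb_eval : LinearMap.funLeft ℝ ℝ s ∘ b = Sum.elim X.col v := by
    funext x
    rcases x with j | m
    · exact funext fun i => (hXval i j).symm
    · exact eigenSpline_comp hΦval hXval (hlam m).ne' (hv m) (heig m)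
  have hind : LinearIndependent ℝ b :=
    .of_comp _ (hb_eval ▸ linearIndependent_sumElim_col_of_orthonormal hXinj horth hv)
  have hspan : Submodule.span ℝ (Set.range b) = splineSpace X φ p := by
    refine span_eq_splineSpace_of_linearIndependent hind ?_ (by simp [hX]; omega)
    rintro (j | m)
    · exact mem_splineSpace_right X φ p j
    · exact eigenSpline_mem_splineSpace Φ _ (hv m)
  rw [← hfs_b, EquivLike.range_comp] at hspan
  refine ⟨fun α β => eq_zero_of_mulVec_add_mulVec_eq_zero hXinj hpos,
    (linearIndependent_equiv _).mp (hfs_b ▸ hind), ?_⟩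
  ext g
  simp [hspan, mem_splineSpace, splineCombination_mk, eq_comm]
end
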